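/- arXiv:2208.04993 — 4 statements merged into one kernel-verified Lean document; each statement's English description precedes it below -/
import Mathlib

section
/- Let S : Set Σ → ℝ satisfy the submodularity-type inequality S(x \ y) + S(y \ x) ≤ S(x) + S(y) for all sets x, y. Let E(a) denote, for each set a, a superset of a that minimizes S among all supersets of a, and assume this minimizer is unique in the sense that any superset of a attaining the minimal value and contained in E(a) equals E(a). If a ∩ E(b) = ∅ and b ∩ E(a) = ∅, then E(a) ∩ E(b) = ∅ (no-cloning). -/
theorem gew_no_cloning {X : Type*} (S : Set X → ℝ) (E : Set X → Set X)
    (hS : ∀ x y : Set X, S (x \ y) + S (y \ x) ≤ S x + S y)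
    (hsub : ∀ a, a ⊆ E a)
    (hmin : ∀ a c, a ⊆ c → S (E a) ≤ S c)
    (huniq : ∀ a c, a ⊆ c → S c = S (E a) → c ⊆ E a → c = E a)
    (a b : Set X) (hab : a ∩ E b = ∅) (hba : b ∩ E a = ∅) :
    E a ∩ E b = ∅ := by
  have ha : a ⊆ E a \ E b := fun x hx =>
    ⟨hsub a hx, fun hxb => Set.eq_empty_iff_forall_notMem.mp hab x ⟨hx, hxb⟩⟩
  have hb : b ⊆ E b \ E a := fun x hx =>
    ⟨hsub b hx, fun hxa => Set.eq_empty_iff_forall_notMem.mp hba x ⟨hx, hxa⟩⟩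
  have h1 := hmin a _ ha
  have h2 := hmin b _ hb
  have h3 := hS (E a) (E b)
  have heq : S (E a \ E b) = S (E a) := by linarith
  have hEa := huniq a (E a \ E b) ha heq Set.diff_subset
  rw [← hEa]
  ext x
  simp [Set.mem_diff]
end

section
/- Let S : Set Σ → ℝ satisfy submodularity: S(x ∩ y) + S(x ∪ y) ≤ S(x) + S(y) for all sets x, y. For each set a, let E(a) be a superset of a minimizing S among all supersets of a. Then for any three pairwise disjoint sets a, b, c: S(E(a ∪ b)) + S(E(b ∪ c)) ≥ S(E(b)) + S(E(a ∪ b ∪ c)) (strong subadditivity of generalized entanglement wedge entropy). -/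
theorem gew_strong_subadditivity {X : Type*} (S : Set X → ℝ) (E : Set X → Set X)
    (hS : ∀ x y : Set X, S (x ∩ y) + S (x ∪ y) ≤ S x + S y)
    (hsub : ∀ a, a ⊆ E a)
    (hmin : ∀ a c, a ⊆ c → S (E a) ≤ S c)
    (a b c : Set X) (hab : a ∩ b = ∅) (hbc : b ∩ c = ∅) (hac : a ∩ c = ∅) :
    S (E b) + S (E (a ∪ b ∪ c)) ≤ S (E (a ∪ b)) + S (E (b ∪ c)) := by
  have h1 : S (E b) ≤ S (E (a ∪ b) ∩ E (b ∪ c)) :=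
    hmin _ _ (Set.subset_inter (fun x hx => hsub _ (Or.inr hx)) (fun x hx => hsub _ (Or.inl hx)))
  have h2 : S (E (a ∪ b ∪ c)) ≤ S (E (a ∪ b) ∪ E (b ∪ c)) := by
    apply hmin
    rintro x (hx | hx)
    · exact Or.inl (hsub _ hx)
    · exact Or.inr (hsub _ (Or.inr hx))
  linarith [hS (E (a ∪ b)) (E (b ∪ c))]
end

section
/- Let L be a finite set, S : Set L → ℝ submodular, and define E(a) to be the intersection of all minimizers of S over supersets of a (which by closure of minimizers under intersection is itself a minimizer). Then E satisfies nesting: a ⊆ b implies E(a) ⊆ E(b). -/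
theorem minimal_minimizer_nesting {L : Type*} [Fintype L] (S : Set L → ℝ)
    (hS : ∀ x y : Set L, S (x ∩ y) + S (x ∪ y) ≤ S x + S y)
    (E : Set L → Set L)
    (hE : ∀ a, E a = ⋂₀ {c | a ⊆ c ∧ ∀ d, a ⊆ d → S c ≤ S d}) :
    ∀ a b : Set L, a ⊆ b → E a ⊆ E b := by
  intro a b hab x hx
  rw [hE] at hx ⊢
  intro c hc
  obtain ⟨hbc, hcmin⟩ := hc
  -- obtain a minimizer m over supersets of a
  obtain ⟨m, hm, hmmin⟩ := Set.exists_min_image {d : Set L | a ⊆ d} S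
    (Set.toFinite _) ⟨a, Set.mem_setOf.mpr subset_rfl⟩
  -- c ∩ m is a minimizer over supersets of a
  have h1 : S c ≤ S (c ∪ m) := hcmin _ (hbc.trans Set.subset_union_left)
  have h2 : S (c ∩ m) ≤ S m := by
    have := hS c m
    linarith
  have hmem : x ∈ c ∩ m := by
    apply hx
    constructor
    · exact Set.subset_inter (hab.trans hbc) hm
    · intro d hd
      exact h2.trans (hmmin d hd)
  exact hmem.1
end

section
/- Let L be a finite set, S : Set L → ℝ submodular, and let E(a) be the minimal minimizer of S over supersets of a. Then for disjoint a, b ⊆ L with a ∩ E(b) = ∅ and b ∩ E(a) = ∅, if in addition S satisfies S(x\y) + S(y\x) ≤ S(x) + S(y) for all x, y, then E(a) ∩ E(b) = ∅. -/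
/-!
Submodularity makes the minimizers of `S` above `a` closed under intersection, so on a finite
set they have a least element `E a`. If `a ∩ E b = ∅` and `b ∩ E a = ∅`, then `E a \ E b` and
`E b \ E a` still contain `a` and `b`, so by the inequality `S (x \ y) + S (y \ x) ≤ S x + S y`
removing the overlap cannot increase `S (E a) + S (E b)`. Hence `E a \ E b` is again a
minimizer above `a`, and minimality of `E a` forces the overlap to be empty.
-/

section Minimizers

variable {α β : Type*}

def minimizersAbove [LE α] [LE β] (S : α → β) (a : α) : Set α :=
  {c | a ≤ c ∧ ∀ d, a ≤ d → S c ≤ S d}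

theorem minimizersAbove_nonempty [Preorder α] [Finite α] [LinearOrder β] (S : α → β) (a : α) :
    (minimizersAbove S a).Nonempty := by
  obtain ⟨c, hac, hc⟩ := Set.exists_min_image (Set.Ici a) S (Set.toFinite _) ⟨a, le_rfl⟩
  exact ⟨c, hac, hc⟩

variable [AddCommMonoid β] [LinearOrder β] [IsOrderedCancelAddMonoid β]

theorem infClosed_minimizersAbove [Lattice α] {S : α → β}
    (hS : ∀ x y, S (x ⊓ y) + S (x ⊔ y) ≤ S x + S y) (a : α) :
    InfClosed (minimizersAbove S a) := by
  intro c ⟨hac, hc⟩ c' ⟨hac', hc'⟩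
  refine ⟨le_inf hac hac', fun d had => ?_⟩
  have hsup : S c ≤ S (c ⊔ c') := hc _ (hac.trans le_sup_left)
  have hinf : S (c ⊓ c') ≤ S c' := by
    refine le_of_add_le_add_right (a := S (c ⊔ c')) ?_
    calc S (c ⊓ c') + S (c ⊔ c') ≤ S c + S c' := hS c c'
      _ ≤ S (c ⊔ c') + S c' := by gcongr
      _ = S c' + S (c ⊔ c') := add_comm _ _
  exact hinf.trans (hc' d had)

theorem sInf_minimizersAbove_mem [CompleteLattice α] [Finite α] {S : α → β}
    (hS : ∀ x y, S (x ⊓ y) + S (x ⊔ y) ≤ S x + S y) (a : α) :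
    sInf (minimizersAbove S a) ∈ minimizersAbove S a :=
  (infClosed_minimizersAbove hS a).sInf_mem_of_nonempty (Set.toFinite _)
    (minimizersAbove_nonempty S a) subset_rfl

theorem sdiff_mem_minimizersAbove [GeneralizedBooleanAlgebra α] {S : α → β}
    (hS : ∀ x y, S (x \ y) + S (y \ x) ≤ S x + S y) {a b c d : α}
    (hc : c ∈ minimizersAbove S a) (hd : d ∈ minimizersAbove S b)
    (had : Disjoint a d) (hbc : Disjoint b c) :
    c \ d ∈ minimizersAbove S a := by
  have hacd : a ≤ c \ d := le_sdiff.mpr ⟨hc.1, had⟩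
  have hd_le : S d ≤ S (d \ c) := hd.2 _ (le_sdiff.mpr ⟨hd.1, hbc⟩)
  have hcd : S (c \ d) ≤ S c := by
    refine le_of_add_le_add_right (a := S (d \ c)) ?_
    calc S (c \ d) + S (d \ c) ≤ S c + S d := hS c d
      _ ≤ S c + S (d \ c) := by gcongr
  exact ⟨hacd, fun e hae => hcd.trans (hc.2 e hae)⟩

end Minimizers

theorem minimal_minimizer_no_cloning_general {L : Type*} [Fintype L] (S : Set L → ℝ)
    (hS : ∀ x y : Set L, S (x ∩ y) + S (x ∪ y) ≤ S x + S y)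
    (hS' : ∀ x y : Set L, S (x \ y) + S (y \ x) ≤ S x + S y)
    (E : Set L → Set L)
    (hE : ∀ a, E a = ⋂₀ {c | a ⊆ c ∧ ∀ d, a ⊆ d → S c ≤ S d})
    (a b : Set L)
    (hab : a ∩ E b = ∅) (hba : b ∩ E a = ∅) :
    E a ∩ E b = ∅ := by
  have hE_eq : ∀ a, E a = sInf (minimizersAbove S a) := hE
  have hEa := hE_eq a ▸ sInf_minimizersAbove_mem hS a
  have hEb := hE_eq b ▸ sInf_minimizersAbove_mem hS b
  have hdiff : E a \ E b ∈ minimizersAbove S a :=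
    sdiff_mem_minimizersAbove hS' hEa hEb (Set.disjoint_iff_inter_eq_empty.mpr hab)
      (Set.disjoint_iff_inter_eq_empty.mpr hba)
  have hle : E a ≤ E a \ E b := (hE_eq a).le.trans (sInf_le hdiff)
  exact Set.disjoint_iff_inter_eq_empty.mp (le_sdiff.mp hle).2

theorem minimal_minimizer_no_cloning {L : Type*} [Fintype L] (S : Set L → ℝ)
    (hS : ∀ x y : Set L, S (x ∩ y) + S (x ∪ y) ≤ S x + S y)
    (hS' : ∀ x y : Set L, S (x \ y) + S (y \ x) ≤ S x + S y)
    (E : Set L → Set L)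
    (hE : ∀ a, E a = ⋂₀ {c | a ⊆ c ∧ ∀ d, a ⊆ d → S c ≤ S d})
    (a b : Set L) (hdisj : a ∩ b = ∅)
    (hab : a ∩ E b = ∅) (hba : b ∩ E a = ∅) :
    E a ∩ E b = ∅ :=
  minimal_minimizer_no_cloning_general S hS hS' E hE a b hab hba
end
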